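/- arXiv:2210.01376 — 5 statements merged into one kernel-verified Lean document; each statement's English description precedes it below -/
import Mathlib

section
/- There exists a universal constant C such that the following holds. In the time-varying feedback-graph setting with implicit-exploration parameter γ ∈ (0, 1/2], define Q_t = Σ_{i∈S_t} p_{t,i}/(W_{t,i}+γ) and X_{t,1} = Σ_{i∈S_t} (p_{t,i}/(W_{t,i}+γ))(ℓ̂_{t,i} − ℓ_{t,i}). Then for every δ ∈ (0,1), with probability at least 1 − δ, Σ_{t=1}^T X_{t,1} ≤ C · ( Σ_{t=1}^T Q_t² / (γ · U_T) + U_T · log(KT/(δγ)) ), where U_T = max{1, max_{t∈[T]} X_{t,1}}. -/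
/-!
Write `X_t = Z_t - R_t`, where `Z_t = ∑_{i ∈ S_t} p_{t,i} / (W_{t,i} + γ) · ℓ̂_{t,i}` and `R_t`
is the same sum with `ℓ_{t,i}` in place of `ℓ̂_{t,i}`. Given `F_{t-1}`, the estimate `ℓ̂_{t,i}`
has mean `ℓ_{t,i} W_{t,i} / (W_{t,i} + γ) ≤ ℓ_{t,i}`, so `E[X_t | F_{t-1}] ≤ 0`; and since
`0 ≤ Z_t ≤ Q_t / γ` and `0 ≤ R_t ≤ Q_t`, we have `X_t² ≤ (Q_t / γ)(Z_t + R_t)`, whence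
`E[X_t² | F_{t-1}] ≤ 2 Q_t² / γ`.

For a fixed `η` with `η X_t ≤ 1/2`, the inequality `eˣ ≤ 1 + x + 2x²` makes
`exp (η ∑ X_t - 2η² ∑ 2Q_t²/γ)` a supermartingale, and Markov's inequality gives Freedman's bound.
The scale `U_T` is random but lies in `[1, 2^J]` with `J = O(1/γ)`, because `|X_t| ≤ 1/γ²`:
running the bound on `X_t` truncated at `2^j` with `η = 2^{-(j+1)}` for every `j ≤ J` and taking a
union bound costs only `log (J + 1) = O(log (1/γ))` in the deviation term.
-/

open MeasureTheory Real Finset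

noncomputable section ImplicitExploration

variable {α : Type*}

/- One round of the game: `N i` is the in-neighbourhood of arm `i`, so `inMass p N i` is `W_i` and
`i ∈ N i` says that `i` has a self-loop, and `k` is the arm drawn. Then `selfLoopMass` is `Q_t`,
`selfLoopError k` is `X_{t,1}`, and `selfLoopEstimate k`, `selfLoopLoss` are `Z_t`, `R_t`. -/

def inMass (p : α → ℝ) (N : α → Finset α) (i : α) : ℝ := ∑ j ∈ N i, p j

variable {γ : ℝ} {p ℓ : α → ℝ} {N : α → Finset α}

theorem inMass_nonneg (hp : ∀ j, 0 ≤ p j) (i : α) : 0 ≤ inMass p N i :=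
  sum_nonneg fun j _ => hp j

theorem inMass_add_pos (hp : ∀ j, 0 ≤ p j) (hγ : 0 < γ) (i : α) : 0 < inMass p N i + γ :=
  add_pos_of_nonneg_of_pos (inMass_nonneg hp i) hγ

theorem selfLoopWeight_nonneg (hp : ∀ j, 0 ≤ p j) (hγ : 0 < γ) (i : α) :
    0 ≤ p i / (inMass p N i + γ) :=
  div_nonneg (hp i) (inMass_add_pos hp hγ i).le

variable [DecidableEq α]

def ixEstimate (γ : ℝ) (p : α → ℝ) (N : α → Finset α) (ℓ : α → ℝ) (k i : α) : ℝ :=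
  if k ∈ N i then ℓ i / (inMass p N i + γ) else 0

theorem ixEstimate_nonneg (hp : ∀ j, 0 ≤ p j) (hℓ : ∀ i, 0 ≤ ℓ i) (hγ : 0 < γ) (k i : α) :
    0 ≤ ixEstimate γ p N ℓ k i := by
  unfold ixEstimate
  split_ifs
  exacts [div_nonneg (hℓ i) (inMass_add_pos hp hγ i).le, le_rfl]

theorem ixEstimate_le (hp : ∀ j, 0 ≤ p j) (hℓ : ∀ i, ℓ i ≤ 1) (hγ : 0 < γ) (k i : α) :
    ixEstimate γ p N ℓ k i ≤ 1 / γ := by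
  unfold ixEstimate
  split_ifs
  · exact div_le_div₀ zero_le_one (hℓ i) hγ (le_add_of_nonneg_left (inMass_nonneg hp i))
  · positivity

variable [Fintype α]

def selfLoopMass (γ : ℝ) (p : α → ℝ) (N : α → Finset α) : ℝ :=
  ∑ i ∈ univ.filter (fun i => i ∈ N i), p i / (inMass p N i + γ)

def selfLoopEstimate (γ : ℝ) (p : α → ℝ) (N : α → Finset α) (ℓ : α → ℝ) (k : α) : ℝ :=
  ∑ i ∈ univ.filter (fun i => i ∈ N i), p i / (inMass p N i + γ) * ixEstimate γ p N ℓ k i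

def selfLoopLoss (γ : ℝ) (p : α → ℝ) (N : α → Finset α) (ℓ : α → ℝ) : ℝ :=
  ∑ i ∈ univ.filter (fun i => i ∈ N i), p i / (inMass p N i + γ) * ℓ i

def selfLoopError (γ : ℝ) (p : α → ℝ) (N : α → Finset α) (ℓ : α → ℝ) (k : α) : ℝ :=
  ∑ i ∈ univ.filter (fun i => i ∈ N i), p i / (inMass p N i + γ) * (ixEstimate γ p N ℓ k i - ℓ i)

theorem sum_mul_ixEstimate (γ : ℝ) (p : α → ℝ) (N : α → Finset α) (ℓ : α → ℝ) (i : α) :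
    ∑ k, p k * ixEstimate γ p N ℓ k i = inMass p N i * (ℓ i / (inMass p N i + γ)) := by
  simp only [ixEstimate, mul_ite, mul_zero, sum_ite_mem, univ_inter, ← sum_mul, inMass]

theorem sum_mul_ixEstimate_le (hp : ∀ j, 0 ≤ p j) (hℓ : ∀ i, 0 ≤ ℓ i) (hγ : 0 < γ) (i : α) :
    ∑ k, p k * ixEstimate γ p N ℓ k i ≤ ℓ i := by
  have hW := inMass_nonneg (N := N) hp i
  rw [sum_mul_ixEstimate, mul_div_assoc', div_le_iff₀ (inMass_add_pos hp hγ i)]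
  nlinarith [hℓ i]

theorem selfLoopMass_nonneg (hp : ∀ j, 0 ≤ p j) (hγ : 0 < γ) : 0 ≤ selfLoopMass γ p N :=
  sum_nonneg fun i _ => selfLoopWeight_nonneg hp hγ i

theorem selfLoopMass_le (hp : ∀ j, 0 ≤ p j) (hp1 : ∑ j, p j = 1) (hγ : 0 < γ) :
    selfLoopMass γ p N ≤ 1 / γ := by
  calc selfLoopMass γ p N ≤ ∑ i ∈ univ.filter (fun i => i ∈ N i), p i / γ :=
        sum_le_sum fun i _ =>
          div_le_div_of_nonneg_left (hp i) hγ (le_add_of_nonneg_left (inMass_nonneg hp i))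
    _ ≤ ∑ i, p i / γ :=
        sum_le_sum_of_subset_of_nonneg (filter_subset _ _) fun i _ _ => div_nonneg (hp i) hγ.le
    _ = 1 / γ := by rw [← sum_div, hp1]

theorem selfLoopEstimate_nonneg (hp : ∀ j, 0 ≤ p j) (hℓ : ∀ i, 0 ≤ ℓ i) (hγ : 0 < γ) (k : α) :
    0 ≤ selfLoopEstimate γ p N ℓ k :=
  sum_nonneg fun i _ => mul_nonneg (selfLoopWeight_nonneg hp hγ i) (ixEstimate_nonneg hp hℓ hγ k i)

theorem selfLoopEstimate_le (hp : ∀ j, 0 ≤ p j) (hℓ : ∀ i, ℓ i ≤ 1) (hγ : 0 < γ) (k : α) :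
    selfLoopEstimate γ p N ℓ k ≤ selfLoopMass γ p N / γ := by
  rw [selfLoopMass, sum_div]
  refine sum_le_sum fun i _ => ?_
  rw [div_eq_mul_one_div _ γ]
  exact mul_le_mul_of_nonneg_left (ixEstimate_le hp hℓ hγ k i) (selfLoopWeight_nonneg hp hγ i)

theorem selfLoopLoss_nonneg (hp : ∀ j, 0 ≤ p j) (hℓ : ∀ i, 0 ≤ ℓ i) (hγ : 0 < γ) :
    0 ≤ selfLoopLoss γ p N ℓ :=
  sum_nonneg fun i _ => mul_nonneg (selfLoopWeight_nonneg hp hγ i) (hℓ i)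

theorem selfLoopLoss_le (hp : ∀ j, 0 ≤ p j) (hℓ : ∀ i, ℓ i ≤ 1) (hγ : 0 < γ) :
    selfLoopLoss γ p N ℓ ≤ selfLoopMass γ p N :=
  sum_le_sum fun i _ => mul_le_of_le_one_right (selfLoopWeight_nonneg hp hγ i) (hℓ i)

theorem sum_mul_selfLoopEstimate_le (hp : ∀ j, 0 ≤ p j) (hℓ : ∀ i, 0 ≤ ℓ i) (hγ : 0 < γ) :
    ∑ k, p k * selfLoopEstimate γ p N ℓ k ≤ selfLoopLoss γ p N ℓ := by
  simp only [selfLoopEstimate, mul_sum]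
  rw [sum_comm]
  refine sum_le_sum fun i _ => ?_
  simp only [mul_left_comm (p _), ← mul_sum]
  exact mul_le_mul_of_nonneg_left (sum_mul_ixEstimate_le hp hℓ hγ i)
    (selfLoopWeight_nonneg hp hγ i)

theorem selfLoopError_eq_sub (γ : ℝ) (p : α → ℝ) (N : α → Finset α) (ℓ : α → ℝ) (k : α) :
    selfLoopError γ p N ℓ k = selfLoopEstimate γ p N ℓ k - selfLoopLoss γ p N ℓ := by
  simp only [selfLoopError, selfLoopEstimate, selfLoopLoss, mul_sub, sum_sub_distrib]

theorem abs_selfLoopError_le (hp : ∀ j, 0 ≤ p j) (hℓ : ∀ i, ℓ i ∈ Set.Icc (0 : ℝ) 1)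
    (hγ : 0 < γ) (hγ1 : γ ≤ 1) (k : α) :
    |selfLoopError γ p N ℓ k| ≤ selfLoopMass γ p N / γ := by
  have hQ : selfLoopMass γ p N ≤ selfLoopMass γ p N / γ :=
    le_div_self (selfLoopMass_nonneg hp hγ) hγ hγ1
  rw [selfLoopError_eq_sub, abs_le]
  constructor
  · linarith [selfLoopEstimate_nonneg hp (fun i => (hℓ i).1) hγ k (N := N),
      selfLoopLoss_le hp (fun i => (hℓ i).2) hγ (N := N)]
  · linarith [selfLoopEstimate_le hp (fun i => (hℓ i).2) hγ k (N := N),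
      selfLoopLoss_nonneg hp (fun i => (hℓ i).1) hγ (N := N)]

theorem abs_selfLoopError_le_one_div_sq (hp : ∀ j, 0 ≤ p j) (hp1 : ∑ j, p j = 1)
    (hℓ : ∀ i, ℓ i ∈ Set.Icc (0 : ℝ) 1) (hγ : 0 < γ) (hγ1 : γ ≤ 1) (k : α) :
    |selfLoopError γ p N ℓ k| ≤ 1 / γ ^ 2 :=
  calc |selfLoopError γ p N ℓ k| ≤ selfLoopMass γ p N / γ := abs_selfLoopError_le hp hℓ hγ hγ1 k
    _ ≤ 1 / γ / γ := by gcongr; exact selfLoopMass_le hp hp1 hγ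
    _ = 1 / γ ^ 2 := by rw [div_div, sq]

theorem sum_mul_selfLoopError_nonpos (hp : ∀ j, 0 ≤ p j) (hp1 : ∑ j, p j = 1)
    (hℓ : ∀ i, 0 ≤ ℓ i) (hγ : 0 < γ) :
    ∑ k, p k * selfLoopError γ p N ℓ k ≤ 0 := by
  simp only [selfLoopError_eq_sub, mul_sub, sum_sub_distrib, ← sum_mul, hp1, one_mul]
  linarith [sum_mul_selfLoopEstimate_le hp hℓ hγ (N := N)]

theorem sum_mul_selfLoopError_sq_le (hp : ∀ j, 0 ≤ p j) (hp1 : ∑ j, p j = 1)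
    (hℓ : ∀ i, ℓ i ∈ Set.Icc (0 : ℝ) 1) (hγ : 0 < γ) (hγ1 : γ ≤ 1) :
    ∑ k, p k * selfLoopError γ p N ℓ k ^ 2 ≤ 2 * selfLoopMass γ p N ^ 2 / γ := by
  set Q := selfLoopMass γ p N
  set R := selfLoopLoss γ p N ℓ
  set Z := selfLoopEstimate γ p N ℓ
  have hR : 0 ≤ R := selfLoopLoss_nonneg hp (fun i => (hℓ i).1) hγ
  have hQγ : 0 ≤ Q / γ := div_nonneg (selfLoopMass_nonneg hp hγ) hγ.le
  -- `X² = |X| |Z - R| ≤ (Q / γ) (Z + R)`, and `Z` has mean at most `R ≤ Q`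
  have hsq : ∀ k, selfLoopError γ p N ℓ k ^ 2 ≤ Q / γ * (Z k + R) := fun k => by
    have hZ : 0 ≤ Z k := selfLoopEstimate_nonneg hp (fun i => (hℓ i).1) hγ k
    rw [sq, ← abs_mul_abs_self]
    refine mul_le_mul (abs_selfLoopError_le hp hℓ hγ hγ1 k) ?_ (abs_nonneg _) hQγ
    rw [selfLoopError_eq_sub, abs_le]
    constructor <;> linarith
  calc ∑ k, p k * selfLoopError γ p N ℓ k ^ 2 ≤ ∑ k, p k * (Q / γ * (Z k + R)) :=
        sum_le_sum fun k _ => mul_le_mul_of_nonneg_left (hsq k) (hp k)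
    _ = Q / γ * (∑ k, p k * Z k + R) := by
        simp only [mul_left_comm (p _), ← mul_sum, mul_add, sum_add_distrib, ← sum_mul, hp1,
          one_mul]
    _ ≤ Q / γ * (R + R) := by
        gcongr
        exact sum_mul_selfLoopEstimate_le hp (fun i => (hℓ i).1) hγ
    _ ≤ Q / γ * (Q + Q) := by
        have := selfLoopLoss_le hp (fun i => (hℓ i).2) hγ (N := N)
        gcongr
    _ = 2 * Q ^ 2 / γ := by ring

end ImplicitExploration

section Freedman

variable {Ω : Type*} {m0 : MeasurableSpace Ω} {μ : Measure Ω}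

-- `exp x ≤ 1 / (1 - x)` and `(1 - x) (1 + x + 2 x²) = 1 + x² (1 - 2 x) ≥ 1`.
theorem exp_le_one_add_add_two_mul_sq {x : ℝ} (hx : x ≤ 1 / 2) : exp x ≤ 1 + x + 2 * x ^ 2 := by
  have h1 : 1 - x ≤ exp (-x) := by linarith [add_one_le_exp (-x)]
  have h2 : exp x * exp (-x) = 1 := by rw [← exp_add, add_neg_cancel, exp_zero]
  nlinarith [exp_pos x, exp_pos (-x), sq_nonneg x]

theorem integrable_exp_of_le [IsFiniteMeasure μ] {f : Ω → ℝ} (hf : AEStronglyMeasurable f μ)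
    {C : ℝ} (hfC : ∀ ω, f ω ≤ C) : Integrable (fun ω => exp (f ω)) μ := by
  refine Integrable.of_bound (continuous_exp.comp_aestronglyMeasurable hf) (exp C)
    (ae_of_all _ fun ω => ?_)
  rw [norm_of_nonneg (exp_pos _).le]
  exact exp_le_exp.2 (hfC ω)

theorem condExp_exp_mul_le [IsFiniteMeasure μ] {m : MeasurableSpace Ω} (hm : m ≤ m0)
    {Y v : Ω → ℝ} {η : ℝ} (hY : Integrable Y μ) (hY2 : Integrable (fun ω => Y ω ^ 2) μ)
    (hη : 0 ≤ η) (hηY : ∀ ω, η * Y ω ≤ 1 / 2) (hmean : μ[Y | m] ≤ᵐ[μ] 0)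
    (hvar : μ[fun ω => Y ω ^ 2 | m] ≤ᵐ[μ] v) :
    μ[fun ω => exp (η * Y ω) | m] ≤ᵐ[μ] fun ω => exp (2 * η ^ 2 * v ω) := by
  have hexp : Integrable (fun ω => exp (η * Y ω)) μ :=
    integrable_exp_of_le (hY.1.const_mul η) hηY
  have hpoly_eq : (fun ω => 1 + η * Y ω + 2 * η ^ 2 * Y ω ^ 2) =
      (fun _ => (1 : ℝ)) + η • Y + (2 * η ^ 2) • fun ω => Y ω ^ 2 := by
    ext ω; simp only [Pi.add_apply, Pi.smul_apply, smul_eq_mul]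
  have hpoly : Integrable (fun ω => 1 + η * Y ω + 2 * η ^ 2 * Y ω ^ 2) μ := by
    rw [hpoly_eq]
    exact ((integrable_const 1).add (hY.smul η)).add (hY2.smul (2 * η ^ 2))
  have hpoly_condExp : μ[fun ω => 1 + η * Y ω + 2 * η ^ 2 * Y ω ^ 2 | m] =ᵐ[μ]
      fun ω => 1 + η * μ[Y | m] ω + 2 * η ^ 2 * μ[fun ω => Y ω ^ 2 | m] ω := by
    rw [hpoly_eq]
    filter_upwards [condExp_add ((integrable_const 1).add (hY.smul η)) (hY2.smul (2 * η ^ 2)) m,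
      condExp_add (integrable_const (1 : ℝ)) (hY.smul η) m, condExp_smul (μ := μ) η Y m,
      condExp_smul (μ := μ) (2 * η ^ 2) (fun ω => Y ω ^ 2) m] with ω h1 h2 h3 h4
    simp only [Pi.add_apply, Pi.smul_apply, smul_eq_mul] at h1 h2 h3 h4
    rw [h1, h2, h3, h4, condExp_const hm]
  have hexp_le : ∀ ω, exp (η * Y ω) ≤ 1 + η * Y ω + 2 * η ^ 2 * Y ω ^ 2 := fun ω =>
    (exp_le_one_add_add_two_mul_sq (hηY ω)).trans_eq (by ring)
  filter_upwards [condExp_mono (m := m) hexp hpoly (ae_of_all _ hexp_le), hpoly_condExp, hmean,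
    hvar] with ω h1 h2 h3 h4
  have h5 : η * μ[Y | m] ω ≤ 0 := mul_nonpos_of_nonneg_of_nonpos hη h3
  have h6 := mul_le_mul_of_nonneg_left h4 (by positivity : (0 : ℝ) ≤ 2 * η ^ 2)
  linarith [add_one_le_exp (2 * η ^ 2 * v ω)]

theorem exists_pow_two_mem_Icc {u : ℝ} (hu : 1 ≤ u) :
    ∀ {J : ℕ}, u ≤ 2 ^ J → ∃ j ≤ J, u ≤ 2 ^ j ∧ (2 : ℝ) ^ j ≤ 2 * u
  | 0, hJ => ⟨0, le_rfl, hJ, by linarith [pow_zero (2 : ℝ)]⟩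
  | J + 1, hJ => by
    by_cases huJ : u ≤ 2 ^ J
    · obtain ⟨j, hj, h⟩ := exists_pow_two_mem_Icc hu huJ
      exact ⟨j, hj.trans J.le_succ, h⟩
    · exact ⟨J + 1, le_rfl, hJ, by rw [pow_succ]; linarith⟩

structure SupermartingaleDiffWithVariance (μ : Measure Ω) (𝒢 : Filtration ℕ m0) (T : ℕ)
    (Y v : ℕ → Ω → ℝ) : Prop where
  measurable : ∀ t, 1 ≤ t → t ≤ T → Measurable[𝒢 t] (Y t)
  measurable_variance : ∀ t, 1 ≤ t → t ≤ T → Measurable[𝒢 (t - 1)] (v t)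
  variance_nonneg : ∀ t ω, 0 ≤ v t ω
  integrable_sq : ∀ t, 1 ≤ t → t ≤ T → Integrable (fun ω => Y t ω ^ 2) μ
  condExp_nonpos : ∀ t, 1 ≤ t → t ≤ T → μ[Y t | 𝒢 (t - 1)] ≤ᵐ[μ] 0
  condExp_sq_le : ∀ t, 1 ≤ t → t ≤ T → μ[fun ω => Y t ω ^ 2 | 𝒢 (t - 1)] ≤ᵐ[μ] v t

/-- The logarithm of Freedman's exponential supermartingale. -/
def freedmanExponent (η : ℝ) (Y v : ℕ → Ω → ℝ) (n : ℕ) (ω : Ω) : ℝ :=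
  η * ∑ t ∈ Icc 1 n, Y t ω - 2 * η ^ 2 * ∑ t ∈ Icc 1 n, v t ω

theorem freedmanExponent_succ (η : ℝ) (Y v : ℕ → Ω → ℝ) (n : ℕ) (ω : Ω) :
    freedmanExponent η Y v (n + 1) ω =
      freedmanExponent η Y v n ω - 2 * η ^ 2 * v (n + 1) ω + η * Y (n + 1) ω := by
  simp only [freedmanExponent, sum_Icc_succ_top (Nat.le_add_left 1 n)]
  ring

theorem freedmanExponent_le {η : ℝ} {Y v : ℕ → Ω → ℝ} (hv : ∀ t ω, 0 ≤ v t ω)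
    (hηY : ∀ t ω, η * Y t ω ≤ 1 / 2) (n : ℕ) (ω : Ω) : freedmanExponent η Y v n ω ≤ n / 2 := by
  have hY : η * ∑ t ∈ Icc 1 n, Y t ω ≤ n / 2 :=
    calc η * ∑ t ∈ Icc 1 n, Y t ω ≤ ∑ _t ∈ Icc 1 n, (1 / 2 : ℝ) := by
          rw [mul_sum]; exact sum_le_sum fun t _ => hηY t ω
      _ = n / 2 := by simp [div_eq_mul_inv]
  have hv : 0 ≤ 2 * η ^ 2 * ∑ t ∈ Icc 1 n, v t ω :=
    mul_nonneg (by positivity) (sum_nonneg fun t _ => hv t ω)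
  unfold freedmanExponent
  linarith

namespace SupermartingaleDiffWithVariance

variable {𝒢 : Filtration ℕ m0} {T : ℕ} {Y v : ℕ → Ω → ℝ}

theorem integrable (h : SupermartingaleDiffWithVariance μ 𝒢 T Y v) [IsFiniteMeasure μ] {t : ℕ}
    (h1 : 1 ≤ t) (h2 : t ≤ T) : Integrable (Y t) μ := by
  have hY : AEStronglyMeasurable (Y t) μ :=
    ((h.measurable t h1 h2).mono (𝒢.le t) le_rfl).aestronglyMeasurable
  exact ((memLp_two_iff_integrable_sq hY).2 (h.integrable_sq t h1 h2)).integrable one_le_two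

theorem measurable_freedmanExponent (h : SupermartingaleDiffWithVariance μ 𝒢 T Y v) (η : ℝ)
    {n : ℕ} (hn : n ≤ T) : Measurable[𝒢 n] (freedmanExponent η Y v n) := by
  refine ((Finset.measurable_sum _ fun t ht => ?_).const_mul η).sub
    ((Finset.measurable_sum _ fun t ht => ?_).const_mul _) <;> rw [mem_Icc] at ht
  · exact (h.measurable t ht.1 (ht.2.trans hn)).mono (𝒢.mono ht.2) le_rfl
  · exact (h.measurable_variance t ht.1 (ht.2.trans hn)).mono (𝒢.mono (by omega)) le_rfl

variable [IsProbabilityMeasure μ]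

theorem integrable_exp_freedmanExponent (h : SupermartingaleDiffWithVariance μ 𝒢 T Y v)
    {η : ℝ} (hηY : ∀ t ω, η * Y t ω ≤ 1 / 2) {n : ℕ} (hn : n ≤ T) :
    Integrable (fun ω => exp (freedmanExponent η Y v n ω)) μ :=
  integrable_exp_of_le
    ((h.measurable_freedmanExponent η hn).mono (𝒢.le n) le_rfl).aestronglyMeasurable
    (freedmanExponent_le h.variance_nonneg hηY n)

theorem integral_exp_freedmanExponent_le_one (h : SupermartingaleDiffWithVariance μ 𝒢 T Y v)
    {η : ℝ} (hη : 0 ≤ η) (hηY : ∀ t ω, η * Y t ω ≤ 1 / 2) {n : ℕ} (hn : n ≤ T) :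
    ∫ ω, exp (freedmanExponent η Y v n ω) ∂μ ≤ 1 := by
  induction n with
  | zero => simp [freedmanExponent]
  | succ n ih =>
    have h1 : 1 ≤ n + 1 := Nat.le_add_left 1 n
    set g : Ω → ℝ := fun ω => exp (freedmanExponent η Y v n ω - 2 * η ^ 2 * v (n + 1) ω)
    have hg : Measurable[𝒢 n] g :=
      ((h.measurable_freedmanExponent η (by omega)).sub
        ((h.measurable_variance (n + 1) h1 hn).const_mul _)).exp
    have hg_le : ∀ ω, ‖g ω‖ ≤ exp (n / 2) := fun ω => by
      rw [norm_of_nonneg (exp_pos _).le]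
      refine exp_le_exp.2 ?_
      have := h.variance_nonneg (n + 1) ω
      linarith [freedmanExponent_le h.variance_nonneg hηY n ω, mul_nonneg (sq_nonneg η) this]
    have hgv : ∀ ω, g ω * exp (2 * η ^ 2 * v (n + 1) ω) = exp (freedmanExponent η Y v n ω) :=
      fun ω => by rw [← exp_add, sub_add_cancel]
    have hstep := condExp_exp_mul_le (𝒢.le n) (h.integrable h1 hn) (h.integrable_sq _ h1 hn) hη
      (hηY (n + 1)) (h.condExp_nonpos _ h1 hn) (h.condExp_sq_le _ h1 hn)
    have hexpY : Integrable (fun ω => exp (η * Y (n + 1) ω)) μ :=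
      integrable_exp_of_le ((h.integrable h1 hn).1.const_mul η) (hηY (n + 1))
    have hS : (fun ω => exp (freedmanExponent η Y v (n + 1) ω)) =
        g * fun ω => exp (η * Y (n + 1) ω) := by
      ext ω
      rw [freedmanExponent_succ, exp_add]
      rfl
    calc ∫ ω, exp (freedmanExponent η Y v (n + 1) ω) ∂μ
        = ∫ ω, μ[g * fun ω => exp (η * Y (n + 1) ω) | 𝒢 n] ω ∂μ := by
          rw [integral_condExp (𝒢.le n), ← hS]
      _ = ∫ ω, g ω * μ[fun ω => exp (η * Y (n + 1) ω) | 𝒢 n] ω ∂μ :=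
          integral_congr_ae (condExp_mul_of_stronglyMeasurable_left hg.stronglyMeasurable
            (hS ▸ h.integrable_exp_freedmanExponent hηY hn) hexpY)
      _ ≤ ∫ ω, g ω * exp (2 * η ^ 2 * v (n + 1) ω) ∂μ := by
          refine integral_mono_ae (integrable_condExp.bdd_mul ?_ (ae_of_all _ hg_le)) ?_ ?_
          · exact (hg.mono (𝒢.le n) le_rfl).aestronglyMeasurable
          · simp only [hgv]; exact h.integrable_exp_freedmanExponent hηY (by omega)
          · filter_upwards [hstep] with ω hω
            exact mul_le_mul_of_nonneg_left hω (exp_pos _).le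
      _ = ∫ ω, exp (freedmanExponent η Y v n ω) ∂μ := by simp only [hgv]
      _ ≤ 1 := ih (by omega)

theorem measure_lt_sum_le (h : SupermartingaleDiffWithVariance μ 𝒢 T Y v) {η : ℝ} (hη : 0 < η)
    (hηY : ∀ t ω, η * Y t ω ≤ 1 / 2) (r : ℝ) :
    μ {ω | 2 * η * ∑ t ∈ Icc 1 T, v t ω + r / η < ∑ t ∈ Icc 1 T, Y t ω} ≤
      ENNReal.ofReal (exp (-r)) := by
  set A := {ω | exp r ≤ exp (freedmanExponent η Y v T ω)}
  have hsub : {ω | 2 * η * ∑ t ∈ Icc 1 T, v t ω + r / η < ∑ t ∈ Icc 1 T, Y t ω} ⊆ A := by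
    intro ω hω
    have := (mul_lt_mul_iff_right₀ hη).2 hω
    rw [mul_add, mul_div_cancel₀ r hη.ne'] at this
    refine exp_le_exp.2 ?_
    unfold freedmanExponent
    nlinarith
  have hmarkov : exp r * μ.real A ≤ 1 :=
    (mul_meas_ge_le_integral_of_nonneg (ae_of_all _ fun ω => (exp_pos _).le)
      (h.integrable_exp_freedmanExponent hηY le_rfl) (exp r)).trans
      (h.integral_exp_freedmanExponent_le_one hη.le hηY le_rfl)
  calc μ _ ≤ μ A := measure_mono hsub
    _ = ENNReal.ofReal (μ.real A) := (ofReal_measureReal).symm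
    _ ≤ ENNReal.ofReal (exp (-r)) := by
        refine ENNReal.ofReal_le_ofReal ?_
        rw [exp_neg, ← one_div, le_div_iff₀ (exp_pos r)]
        linarith

theorem min_const (h : SupermartingaleDiffWithVariance μ 𝒢 T Y v) {c : ℝ} (hc : 0 ≤ c) :
    SupermartingaleDiffWithVariance μ 𝒢 T (fun t ω => min (Y t ω) c) v := by
  have hmin : ∀ t, 1 ≤ t → t ≤ T → Measurable[𝒢 t] fun ω => min (Y t ω) c :=
    fun t h1 h2 => (h.measurable t h1 h2).min measurable_const
  have hmin_sq : ∀ t ω, min (Y t ω) c ^ 2 ≤ Y t ω ^ 2 := fun t ω => by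
    rcases le_total (Y t ω) c with hYc | hcY
    · rw [min_eq_left hYc]
    · rw [min_eq_right hcY]
      exact pow_le_pow_left₀ hc hcY 2
  have hint_sq : ∀ t, 1 ≤ t → t ≤ T → Integrable (fun ω => min (Y t ω) c ^ 2) μ :=
    fun t h1 h2 => (h.integrable_sq t h1 h2).mono'
      (((hmin t h1 h2).mono (𝒢.le t) le_rfl).pow_const 2).aestronglyMeasurable
      (ae_of_all _ fun ω => by
        rw [norm_of_nonneg (sq_nonneg _)]
        exact hmin_sq t ω)
  refine ⟨hmin, h.measurable_variance, h.variance_nonneg, hint_sq, fun t h1 h2 => ?_,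
    fun t h1 h2 => ?_⟩
  · exact (condExp_mono ((h.integrable h1 h2).inf (integrable_const c)) (h.integrable h1 h2)
      (ae_of_all _ fun ω => min_le_left _ _)).trans (h.condExp_nonpos t h1 h2)
  · exact (condExp_mono (hint_sq t h1 h2) (h.integrable_sq t h1 h2)
      (ae_of_all _ (hmin_sq t))).trans (h.condExp_sq_le t h1 h2)

theorem measure_peeling_le (h : SupermartingaleDiffWithVariance μ 𝒢 T Y v) {J : ℕ} {U : Ω → ℝ}
    (hU1 : ∀ ω, 1 ≤ U ω) (hUJ : ∀ ω, U ω ≤ 2 ^ J)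
    (hYU : ∀ t, 1 ≤ t → t ≤ T → ∀ ω, Y t ω ≤ U ω) {r : ℝ} (hr : 0 ≤ r) :
    μ {ω | (∑ t ∈ Icc 1 T, v t ω) / U ω + 4 * U ω * r < ∑ t ∈ Icc 1 T, Y t ω} ≤
      (J + 1) * ENNReal.ofReal (exp (-r)) := by
  -- level `j` truncates `Y` at `2 ^ j` and runs Freedman's bound with `η = 2 ^ -(j + 1)`
  set bad : ℕ → Set Ω := fun j => {ω | 2 * (2 ^ (j + 1))⁻¹ * ∑ t ∈ Icc 1 T, v t ω +
    r / (2 ^ (j + 1))⁻¹ < ∑ t ∈ Icc 1 T, min (Y t ω) (2 ^ j)}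
  have hbad : ∀ j, μ (bad j) ≤ ENNReal.ofReal (exp (-r)) := fun j =>
    (h.min_const (by positivity)).measure_lt_sum_le (by positivity) (fun t ω => by
      rw [inv_mul_le_iff₀ (by positivity), pow_succ]
      linarith [min_le_right (Y t ω) (2 ^ j)]) r
  have hsub : {ω | (∑ t ∈ Icc 1 T, v t ω) / U ω + 4 * U ω * r < ∑ t ∈ Icc 1 T, Y t ω} ⊆
      ⋃ j ∈ range (J + 1), bad j := by
    intro ω hω
    obtain ⟨j, hjJ, hUj, hjU⟩ := exists_pow_two_mem_Icc (hU1 ω) (hUJ ω)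
    refine Set.mem_biUnion (mem_range.2 (Nat.lt_succ_of_le hjJ)) ?_
    have hmin : ∑ t ∈ Icc 1 T, min (Y t ω) (2 ^ j) = ∑ t ∈ Icc 1 T, Y t ω :=
      sum_congr rfl fun t ht =>
        min_eq_left ((hYU t (mem_Icc.1 ht).1 (mem_Icc.1 ht).2 ω).trans hUj)
    have hv : 0 ≤ ∑ t ∈ Icc 1 T, v t ω := sum_nonneg fun t _ => h.variance_nonneg t ω
    simp only [bad, Set.mem_ofPred_eq, hmin]
    calc 2 * (2 ^ (j + 1))⁻¹ * ∑ t ∈ Icc 1 T, v t ω + r / (2 ^ (j + 1))⁻¹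
        = (∑ t ∈ Icc 1 T, v t ω) / 2 ^ j + 2 * 2 ^ j * r := by
          rw [pow_succ]; field_simp
      _ ≤ (∑ t ∈ Icc 1 T, v t ω) / U ω + 4 * U ω * r := by
          refine add_le_add (div_le_div_of_nonneg_left hv (zero_lt_one.trans_le (hU1 ω)) hUj) ?_
          nlinarith
      _ < ∑ t ∈ Icc 1 T, Y t ω := hω
  calc μ _ ≤ μ (⋃ j ∈ range (J + 1), bad j) := measure_mono hsub
    _ ≤ ∑ j ∈ range (J + 1), μ (bad j) := measure_biUnion_finset_le _ _
    _ ≤ ∑ _j ∈ range (J + 1), ENNReal.ofReal (exp (-r)) := sum_le_sum fun j _ => hbad j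
    _ = (J + 1) * ENNReal.ofReal (exp (-r)) := by simp

theorem ofReal_one_sub_le_measure (h : SupermartingaleDiffWithVariance μ 𝒢 T Y v) {J : ℕ}
    {U : Ω → ℝ} (hU1 : ∀ ω, 1 ≤ U ω) (hUJ : ∀ ω, U ω ≤ 2 ^ J)
    (hYU : ∀ t, 1 ≤ t → t ≤ T → ∀ ω, Y t ω ≤ U ω) {δ : ℝ} (hδ0 : 0 < δ) (hδ1 : δ ≤ 1) :
    ENNReal.ofReal (1 - δ) ≤ μ {ω | ∑ t ∈ Icc 1 T, Y t ω ≤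
      (∑ t ∈ Icc 1 T, v t ω) / U ω + 4 * U ω * log ((J + 1) / δ)} := by
  set r := log ((J + 1) / δ)
  have hJ0 : (0 : ℝ) < J + 1 := by positivity
  have hr : 0 ≤ r := log_nonneg (by rw [le_div_iff₀ hδ0]; linarith)
  have hδ : ((J : ENNReal) + 1) * ENNReal.ofReal (exp (-r)) = ENNReal.ofReal δ := by
    rw [exp_neg, exp_log (div_pos hJ0 hδ0), inv_div, ← ENNReal.ofReal_natCast,
      ← ENNReal.ofReal_one, ← ENNReal.ofReal_add (Nat.cast_nonneg _) zero_le_one,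
      ← ENNReal.ofReal_mul hJ0.le, mul_div_cancel₀ _ hJ0.ne']
  set G := {ω | ∑ t ∈ Icc 1 T, Y t ω ≤ (∑ t ∈ Icc 1 T, v t ω) / U ω + 4 * U ω * r}
  have hGc : Gᶜ = {ω | (∑ t ∈ Icc 1 T, v t ω) / U ω + 4 * U ω * r < ∑ t ∈ Icc 1 T, Y t ω} := by
    ext ω
    simp only [G, Set.mem_compl_iff, Set.mem_ofPred_eq, not_le]
  rw [ENNReal.ofReal_sub _ hδ0.le, ENNReal.ofReal_one, tsub_le_iff_right]
  calc 1 = μ Set.univ := measure_univ.symm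
    _ ≤ μ G + μ Gᶜ := measure_univ_le_add_compl G
    _ ≤ μ G + ENNReal.ofReal δ := by grw [hGc, h.measure_peeling_le hU1 hUJ hYU hr, hδ]

end SupermartingaleDiffWithVariance

end Freedman

section Round

variable {Ω α : Type*} [Fintype α] {m m0 : MeasurableSpace Ω}

theorem measurable_sum_of_measurableSet_mem {s : Ω → Finset α} {f : α → Ω → ℝ}
    (hs : ∀ j, MeasurableSet[m] {ω | j ∈ s ω}) (hf : ∀ j, Measurable[m] (f j)) :
    Measurable[m] fun ω => ∑ j ∈ s ω, f j ω := by
  classical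
  have h : (fun ω => ∑ j ∈ s ω, f j ω) = fun ω => ∑ j, if j ∈ s ω then f j ω else 0 := by
    ext ω; rw [sum_ite_mem, univ_inter]
  rw [h]
  exact Finset.measurable_sum _ fun j _ => Measurable.ite (hs j) (hf j) measurable_const

theorem condExp_comp_index_eq_sum [MeasurableSpace α] [MeasurableSingletonClass α]
    {μ : Measure Ω} [IsFiniteMeasure μ] {I : Ω → α} {q : Ω → α → ℝ} {F : α → Ω → ℝ}
    (hm : m ≤ m0) (hI : Measurable I)
    (hlaw : ∀ k, μ[{ω | I ω = k}.indicator 1 | m] =ᵐ[μ] fun ω => q ω k)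
    (hF : ∀ k, Measurable[m] (F k)) {C : ℝ} (hFC : ∀ k ω, |F k ω| ≤ C) :
    μ[fun ω => F (I ω) ω | m] =ᵐ[μ] fun ω => ∑ k, q ω k * F k ω := by
  classical
  have hind : ∀ k, Integrable ({ω | I ω = k}.indicator (1 : Ω → ℝ)) μ := fun k =>
    (integrable_const 1).indicator (hI (measurableSet_singleton k))
  have hprod : ∀ k, Integrable (F k * {ω | I ω = k}.indicator 1) μ := fun k =>
    (hind k).bdd_mul ((hF k).mono hm le_rfl).aestronglyMeasurable (ae_of_all _ (hFC k))
  have hterm : ∀ k, μ[F k * {ω | I ω = k}.indicator 1 | m] =ᵐ[μ] fun ω => q ω k * F k ω :=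
    fun k => by
      filter_upwards [condExp_mul_of_stronglyMeasurable_left (hF k).stronglyMeasurable (hprod k)
        (hind k), hlaw k] with ω h1 h2
      rw [h1, Pi.mul_apply, h2, mul_comm]
  have hdecomp : (fun ω => F (I ω) ω) = ∑ k, F k * {ω | I ω = k}.indicator 1 := by
    ext ω
    simp [Finset.sum_apply, Set.indicator_apply]
  rw [hdecomp]
  filter_upwards [condExp_finsetSum (fun k _ => hprod k) m, ae_all_iff.2 hterm] with ω h1 h2
  rw [h1, Finset.sum_apply]
  exact sum_congr rfl fun k _ => h2 k

theorem measurable_comp_index [MeasurableSpace α] [MeasurableSingletonClass α] {I : Ω → α}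
    {F : α → Ω → ℝ} (hI : Measurable[m] I) (hF : ∀ k, Measurable[m] (F k)) :
    Measurable[m] fun ω => F (I ω) ω :=
  (measurable_from_prod_countable_left (f := fun x : Ω × α => F x.2 x.1) hF).comp
    (measurable_id.prodMk hI)

variable {γ : ℝ} {p ℓ : Ω → α → ℝ} {N : Ω → α → Finset α}

theorem measurable_inMass (hp : ∀ i, Measurable[m] fun ω => p ω i)
    (hN : ∀ i j, MeasurableSet[m] {ω | j ∈ N ω i}) (i : α) :
    Measurable[m] fun ω => inMass (p ω) (N ω) i :=
  measurable_sum_of_measurableSet_mem (hN i) hp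

variable [DecidableEq α]

theorem measurable_selfLoopMass (hp : ∀ i, Measurable[m] fun ω => p ω i)
    (hN : ∀ i j, MeasurableSet[m] {ω | j ∈ N ω i}) :
    Measurable[m] fun ω => selfLoopMass γ (p ω) (N ω) :=
  measurable_sum_of_measurableSet_mem (fun i => by simpa using hN i i) fun i =>
    (hp i).div ((measurable_inMass hp hN i).add_const γ)

theorem measurable_selfLoopError (hp : ∀ i, Measurable[m] fun ω => p ω i)
    (hN : ∀ i j, MeasurableSet[m] {ω | j ∈ N ω i}) (hℓ : ∀ i, Measurable[m] fun ω => ℓ ω i)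
    (k : α) : Measurable[m] fun ω => selfLoopError γ (p ω) (N ω) (ℓ ω) k := by
  have hW : ∀ i, Measurable[m] fun ω => inMass (p ω) (N ω) i + γ := fun i =>
    (measurable_inMass hp hN i).add_const γ
  refine measurable_sum_of_measurableSet_mem (fun i => by simpa using hN i i) fun i =>
    ((hp i).div (hW i)).mul (Measurable.sub ?_ (hℓ i))
  exact Measurable.ite (hN i k) ((hℓ i).div (hW i)) measurable_const

variable [MeasurableSpace α] [MeasurableSingletonClass α] {μ : Measure Ω} [IsFiniteMeasure μ]
  {I : Ω → α}

theorem condExp_selfLoopError_nonpos (hm : m ≤ m0) (hI : Measurable I)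
    (hlaw : ∀ k, μ[{ω | I ω = k}.indicator 1 | m] =ᵐ[μ] fun ω => p ω k)
    (hp : ∀ i, Measurable[m] fun ω => p ω i) (hN : ∀ i j, MeasurableSet[m] {ω | j ∈ N ω i})
    (hℓ : ∀ i, Measurable[m] fun ω => ℓ ω i) (hp0 : ∀ ω i, 0 ≤ p ω i)
    (hp1 : ∀ ω, ∑ i, p ω i = 1) (hℓ01 : ∀ ω i, ℓ ω i ∈ Set.Icc (0 : ℝ) 1) (hγ : 0 < γ)
    (hγ1 : γ ≤ 1) :
    μ[fun ω => selfLoopError γ (p ω) (N ω) (ℓ ω) (I ω) | m] ≤ᵐ[μ] 0 := by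
  filter_upwards [condExp_comp_index_eq_sum (F := fun k ω => selfLoopError γ (p ω) (N ω) (ℓ ω) k)
    hm hI hlaw (measurable_selfLoopError hp hN hℓ)
    fun k ω => abs_selfLoopError_le_one_div_sq (hp0 ω) (hp1 ω) (hℓ01 ω) hγ hγ1 k] with ω hω
  rw [hω]
  exact sum_mul_selfLoopError_nonpos (hp0 ω) (hp1 ω) (fun i => (hℓ01 ω i).1) hγ

theorem condExp_selfLoopError_sq_le (hm : m ≤ m0) (hI : Measurable I)
    (hlaw : ∀ k, μ[{ω | I ω = k}.indicator 1 | m] =ᵐ[μ] fun ω => p ω k)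
    (hp : ∀ i, Measurable[m] fun ω => p ω i) (hN : ∀ i j, MeasurableSet[m] {ω | j ∈ N ω i})
    (hℓ : ∀ i, Measurable[m] fun ω => ℓ ω i) (hp0 : ∀ ω i, 0 ≤ p ω i)
    (hp1 : ∀ ω, ∑ i, p ω i = 1) (hℓ01 : ∀ ω i, ℓ ω i ∈ Set.Icc (0 : ℝ) 1) (hγ : 0 < γ)
    (hγ1 : γ ≤ 1) :
    μ[fun ω => selfLoopError γ (p ω) (N ω) (ℓ ω) (I ω) ^ 2 | m] ≤ᵐ[μ]
      fun ω => 2 * selfLoopMass γ (p ω) (N ω) ^ 2 / γ := by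
  filter_upwards [condExp_comp_index_eq_sum
    (F := fun k ω => selfLoopError γ (p ω) (N ω) (ℓ ω) k ^ 2) hm hI hlaw
    (fun k => (measurable_selfLoopError hp hN hℓ k).pow_const 2) fun k ω => by
      rw [abs_pow]
      exact pow_le_pow_left₀ (abs_nonneg _)
        (abs_selfLoopError_le_one_div_sq (hp0 ω) (hp1 ω) (hℓ01 ω) hγ hγ1 k) 2] with ω hω
  rw [hω]
  exact sum_mul_selfLoopError_sq_le (hp0 ω) (hp1 ω) (hℓ01 ω) hγ hγ1

end Round

theorem supermartingaleDiffWithVariance_selfLoopError {Ω α : Type*} [Fintype α] [DecidableEq α]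
    [MeasurableSpace α] [MeasurableSingletonClass α] {m0 : MeasurableSpace Ω} {μ : Measure Ω}
    [IsProbabilityMeasure μ] (𝒢 : Filtration ℕ m0) {T : ℕ} {γ : ℝ} {ℓ p : ℕ → Ω → α → ℝ}
    {N : ℕ → Ω → α → Finset α} {I : ℕ → Ω → α} (hℓ : ∀ t ω i, ℓ t ω i ∈ Set.Icc (0 : ℝ) 1)
    (hℓm : ∀ t, 1 ≤ t → t ≤ T → ∀ i, Measurable[𝒢 (t - 1)] fun ω => ℓ t ω i)
    (hNm : ∀ t, 1 ≤ t → t ≤ T → ∀ i j, MeasurableSet[𝒢 (t - 1)] {ω | j ∈ N t ω i})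
    (hpm : ∀ t, 1 ≤ t → t ≤ T → ∀ i, Measurable[𝒢 (t - 1)] fun ω => p t ω i)
    (hp0 : ∀ t ω i, 0 ≤ p t ω i) (hp1 : ∀ t ω, ∑ i, p t ω i = 1)
    (hIm : ∀ t, 1 ≤ t → t ≤ T → Measurable[𝒢 t] (I t))
    (hlaw : ∀ t, 1 ≤ t → t ≤ T → ∀ k,
      μ[{ω | I t ω = k}.indicator 1 | 𝒢 (t - 1)] =ᵐ[μ] fun ω => p t ω k)
    (hγ : 0 < γ) (hγ1 : γ ≤ 1) :
    SupermartingaleDiffWithVariance μ 𝒢 T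
      (fun t ω => selfLoopError γ (p t ω) (N t ω) (ℓ t ω) (I t ω))
      (fun t ω => 2 * selfLoopMass γ (p t ω) (N t ω) ^ 2 / γ) := by
  have hI : ∀ t, 1 ≤ t → t ≤ T → Measurable (I t) := fun t h1 h2 =>
    (hIm t h1 h2).mono (𝒢.le t) le_rfl
  have hX : ∀ t, 1 ≤ t → t ≤ T →
      Measurable[𝒢 t] fun ω => selfLoopError γ (p t ω) (N t ω) (ℓ t ω) (I t ω) :=
    fun t h1 h2 => measurable_comp_index (hIm t h1 h2) fun k =>
      (measurable_selfLoopError (hpm t h1 h2) (hNm t h1 h2) (hℓm t h1 h2) k).mono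
        (𝒢.mono (Nat.sub_le t 1)) le_rfl
  refine ⟨hX, fun t h1 h2 => ?_, fun t ω => by positivity, fun t h1 h2 => ?_,
    fun t h1 h2 => ?_, fun t h1 h2 => ?_⟩
  · exact (((measurable_selfLoopMass (hpm t h1 h2) (hNm t h1 h2)).pow_const 2).const_mul
      2).div_const γ
  · refine Integrable.of_bound
      (((hX t h1 h2).mono (𝒢.le t) le_rfl).pow_const 2).aestronglyMeasurable
      ((1 / γ ^ 2) ^ 2) (ae_of_all _ fun ω => ?_)
    rw [norm_pow, Real.norm_eq_abs]
    exact pow_le_pow_left₀ (abs_nonneg _)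
      (abs_selfLoopError_le_one_div_sq (hp0 t ω) (hp1 t ω) (hℓ t ω) hγ hγ1 _) 2
  · exact condExp_selfLoopError_nonpos (𝒢.le _) (hI t h1 h2) (hlaw t h1 h2) (hpm t h1 h2)
      (hNm t h1 h2) (hℓm t h1 h2) (hp0 t) (hp1 t) (hℓ t) hγ hγ1
  · exact condExp_selfLoopError_sq_le (𝒢.le _) (hI t h1 h2) (hlaw t h1 h2) (hpm t h1 h2)
      (hNm t h1 h2) (hℓm t h1 h2) (hp0 t) (hp1 t) (hℓ t) hγ hγ1

theorem exists_pow_two_ge_one_div_sq {γ : ℝ} (hγ : 0 < γ) (hγ2 : γ ≤ 1 / 2) :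
    ∃ J : ℕ, 1 / γ ^ 2 ≤ 2 ^ J ∧ (J : ℝ) + 1 ≤ 4 / γ := by
  set m := ⌈1 / γ⌉₊
  refine ⟨2 * m, ?_, ?_⟩
  · calc 1 / γ ^ 2 = (1 / γ) ^ 2 := by rw [one_div_pow]
      _ ≤ (2 ^ m) ^ 2 := by
          gcongr
          exact (Nat.le_ceil _).trans (by exact_mod_cast Nat.lt_two_pow_self.le)
      _ = 2 ^ (2 * m) := by rw [← pow_mul, mul_comm]
  · have hm : (m : ℝ) * γ < 1 + γ :=
      calc (m : ℝ) * γ < (1 / γ + 1) * γ :=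
            mul_lt_mul_of_pos_right (Nat.ceil_lt_add_one (one_div_pos.2 hγ).le) hγ
        _ = 1 + γ := by field_simp
    rw [le_div_iff₀ hγ]
    push_cast
    nlinarith

theorem log_div_le_two_mul_log {a δ γ x : ℝ} (hδ : 0 < δ) (hδ1 : δ < 1) (hγ : 0 < γ)
    (hγ1 : γ ≤ 1) (ha : 0 < a) (haγ : a ≤ 4 / γ) (hx : 2 ≤ x) :
    log (a / δ) ≤ 2 * log (x / (δ * γ)) := by
  have hδγ : 0 < δ * γ := mul_pos hδ hγ
  have hδγ1 : (δ * γ) ^ 2 ≤ δ * γ :=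
    pow_le_of_le_one hδγ.le (mul_le_one₀ hδ1.le hγ.le hγ1) two_ne_zero
  calc log (a / δ) ≤ log ((x / (δ * γ)) ^ 2) := log_le_log (div_pos ha hδ) <|
        calc a / δ ≤ 4 / γ / δ := by gcongr
          _ = 4 / (δ * γ) := by rw [div_div, mul_comm]
          _ ≤ 4 / (δ * γ) ^ 2 := div_le_div_of_nonneg_left (by norm_num) (by positivity) hδγ1
          _ ≤ x ^ 2 / (δ * γ) ^ 2 := by gcongr; nlinarith
          _ = (x / (δ * γ)) ^ 2 := (div_pow _ _ _).symm
    _ = 2 * log (x / (δ * γ)) := by rw [log_pow]; norm_num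

/-- Concentration of the weighted estimator sum (first part of Lemma `stab_freedman`):
with `Q_t = Σ_{i∈S_t} p_{t,i}/(W_{t,i}+γ)` and
`X_{t,1} = Σ_{i∈S_t} (p_{t,i}/(W_{t,i}+γ))(ℓ̂_{t,i} − ℓ_{t,i})`, for a universal constant
`C`, with probability at least `1 − δ`,
`Σ_t X_{t,1} ≤ C (Σ_t Q_t²/(γ U_T) + U_T log(KT/(δγ)))`, where
`U_T = max{1, max_t X_{t,1}}`. -/
theorem stmt_2 :
    ∃ C : ℝ, 0 < C ∧
    ∀ (Ω : Type) (mΩ : MeasurableSpace Ω) (μ : Measure Ω)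
      (hμ : IsProbabilityMeasure μ)
      (ℱ : ℕ → MeasurableSpace Ω) (hℱle : ∀ t, ℱ t ≤ mΩ) (hℱmono : Monotone ℱ)
      (K T : ℕ) (hK : 2 ≤ K) (hT : 1 ≤ T)
      (ℓ : ℕ → Ω → Fin K → ℝ)
      (hℓmem : ∀ t ω i, ℓ t ω i ∈ Set.Icc (0 : ℝ) 1)
      (hℓmeas : ∀ t, 1 ≤ t → t ≤ T → ∀ i, Measurable[ℱ (t - 1)] fun ω => ℓ t ω i)
      (Nin : ℕ → Ω → Fin K → Finset (Fin K))
      (hNmeas : ∀ t, 1 ≤ t → t ≤ T → ∀ i j,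
        MeasurableSet[ℱ (t - 1)] {ω | j ∈ Nin t ω i})
      (p : ℕ → Ω → Fin K → ℝ)
      (hpmeas : ∀ t, 1 ≤ t → t ≤ T → ∀ i, Measurable[ℱ (t - 1)] fun ω => p t ω i)
      (hpnn : ∀ t ω i, 0 ≤ p t ω i) (hpsum : ∀ t ω, ∑ i, p t ω i = 1)
      (I : ℕ → Ω → Fin K)
      (hImeas : ∀ t, 1 ≤ t → t ≤ T → Measurable[ℱ t] (I t))
      (hIlaw : ∀ t, 1 ≤ t → t ≤ T → ∀ i,
        (μ[fun ω => Set.indicator {ω' | I t ω' = i} (fun _ => (1 : ℝ)) ω | ℱ (t - 1)])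
          =ᵐ[μ] fun ω => p t ω i)
      (W : ℕ → Ω → Fin K → ℝ)
      (hW : ∀ t ω i, W t ω i = ∑ j ∈ Nin t ω i, p t ω j)
      (γ : ℝ) (hγ0 : 0 < γ) (hγhalf : γ ≤ 1 / 2)
      (ℓhat : ℕ → Ω → Fin K → ℝ)
      (hℓhat : ∀ t ω i, ℓhat t ω i =
        if I t ω ∈ Nin t ω i then ℓ t ω i / (W t ω i + γ) else 0)
      (Q : ℕ → Ω → ℝ)
      (hQ : ∀ t ω, Q t ω = ∑ i ∈ Finset.univ.filter (fun i => i ∈ Nin t ω i),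
        p t ω i / (W t ω i + γ))
      (X : ℕ → Ω → ℝ)
      (hX : ∀ t ω, X t ω = ∑ i ∈ Finset.univ.filter (fun i => i ∈ Nin t ω i),
        (p t ω i / (W t ω i + γ)) * (ℓhat t ω i - ℓ t ω i))
      (U : Ω → ℝ)
      (hU : ∀ ω, U ω =
        max 1 ((Finset.Icc 1 T).sup' (Finset.nonempty_Icc.mpr hT) fun t => X t ω))
      (δ : ℝ) (hδ0 : 0 < δ) (hδ1 : δ < 1),
      ENNReal.ofReal (1 - δ) ≤
        μ {ω | ∑ t ∈ Finset.Icc 1 T, X t ω ≤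
          C * ((∑ t ∈ Finset.Icc 1 T, (Q t ω) ^ 2) / (γ * U ω) +
            U ω * Real.log ((K : ℝ) * T / (δ * γ)))} := by
  refine ⟨8, by norm_num, ?_⟩
  intro Ω mΩ μ hμ ℱ hℱle hℱmono K T hK hT ℓ hℓmem hℓmeas Nin hNmeas p hpmeas hpnn hpsum
    I hImeas hIlaw W hW γ hγ0 hγhalf ℓhat hℓhat Q hQ X hX U hU δ hδ0 hδ1
  have hγ1 : γ ≤ 1 := hγhalf.trans (by norm_num)
  have hXeq : X = fun t ω => selfLoopError γ (p t ω) (Nin t ω) (ℓ t ω) (I t ω) := by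
    ext t ω; simp only [hX, hℓhat, hW]; rfl
  have hQeq : Q = fun t ω => selfLoopMass γ (p t ω) (Nin t ω) := by
    ext t ω; simp only [hQ, hW]; rfl
  have hmds : SupermartingaleDiffWithVariance μ ⟨ℱ, hℱmono, hℱle⟩ T X
      fun t ω => 2 * Q t ω ^ 2 / γ := by
    rw [hXeq, hQeq]
    exact supermartingaleDiffWithVariance_selfLoopError _ hℓmem hℓmeas hNmeas hpmeas hpnn hpsum
      hImeas hIlaw hγ0 hγ1
  obtain ⟨J, hJγ, hJ⟩ := exists_pow_two_ge_one_div_sq hγ0 hγhalf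
  have hU1 : ∀ ω, 1 ≤ U ω := fun ω => (hU ω).symm ▸ le_max_left _ _
  have hXU : ∀ t, 1 ≤ t → t ≤ T → ∀ ω, X t ω ≤ U ω := fun t h1 h2 ω =>
    (hU ω).symm ▸ le_max_of_le_right (le_sup' (fun t => X t ω) (mem_Icc.2 ⟨h1, h2⟩))
  have hUJ : ∀ ω, U ω ≤ 2 ^ J := fun ω => (hU ω).symm ▸ max_le (one_le_pow₀ one_le_two)
    (sup'_le _ _ fun t _ => (le_abs_self _).trans <| hXeq ▸
      (abs_selfLoopError_le_one_div_sq (hpnn t ω) (hpsum t ω) (hℓmem t ω) hγ0 hγ1 _).trans hJγ)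
  have hKT : (2 : ℝ) ≤ K * T := by
    have : (2 : ℝ) ≤ K := by exact_mod_cast hK
    have : (1 : ℝ) ≤ T := by exact_mod_cast hT
    nlinarith
  have hrL := log_div_le_two_mul_log hδ0 hδ1 hγ0 hγ1 (by positivity) hJ hKT
  refine (hmds.ofReal_one_sub_le_measure hU1 hUJ hXU hδ0 hδ1.le).trans
    (measure_mono fun ω hω => ?_)
  have hU0 : 0 < U ω := zero_lt_one.trans_le (hU1 ω)
  have hv : (∑ t ∈ Icc 1 T, 2 * Q t ω ^ 2 / γ) / U ω =
      2 * ((∑ t ∈ Icc 1 T, Q t ω ^ 2) / (γ * U ω)) := by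
    rw [← sum_div, ← mul_sum, div_div, mul_div_assoc]
  have hA : 0 ≤ (∑ t ∈ Icc 1 T, Q t ω ^ 2) / (γ * U ω) := by positivity
  simp only [Set.mem_ofPred_eq, hv] at hω ⊢
  nlinarith [mul_le_mul_of_nonneg_left hrL (by positivity : 0 ≤ 4 * U ω)]
end

section
/- Let G = ([K], E) be a directed graph with self-loop node set S = {i : (i,i) ∈ E}, let p be a probability vector on [K], let γ ∈ (0, 1/2], and let ℓ ∈ [0,1]^K. Set W_i = Σ_{j∈N^in(i)} p_j, let I be a random index with law p, and let ℓ̂_i = ℓ_i · 1{I ∈ N^in(i)} / (W_i + γ). Then, with Q = Σ_{i∈S} p_i/(W_i+γ), one has E[ ( Σ_{i∈S} (p_i/(W_i+γ)) · ℓ̂_i )² ] ≤ Q²/γ. -/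
/-!
Write `f(I) = Σ_{i∈S} a_i ℓ̂_i(I)` with `a_i = p_i/(W_i+γ)`. Each `ℓ̂_i` lies in `[0, 1/γ]`, so
`0 ≤ f ≤ Q/γ`, and `E[ℓ̂_i] = W_i ℓ_i/(W_i+γ) ≤ 1`, so `E[f] ≤ Q`. Hence
`E[f²] ≤ (Q/γ) E[f] ≤ Q²/γ`.
-/

open Finset

theorem sum_mul_sq_le_mul_sum_mul {ι : Type*} (s : Finset ι) {w f : ι → ℝ} {M : ℝ}
    (hw : ∀ k ∈ s, 0 ≤ w k) (hf₀ : ∀ k ∈ s, 0 ≤ f k) (hfM : ∀ k ∈ s, f k ≤ M) :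
    ∑ k ∈ s, w k * f k ^ 2 ≤ M * ∑ k ∈ s, w k * f k := by
  rw [mul_sum]
  refine sum_le_sum fun k hk => ?_
  calc w k * f k ^ 2 = w k * f k * f k := by ring
    _ ≤ w k * f k * M := mul_le_mul_of_nonneg_left (hfM k hk) (mul_nonneg (hw k hk) (hf₀ k hk))
    _ = M * (w k * f k) := by ring

theorem ite_div_add_nonneg {P : Prop} [Decidable P] {ℓ W γ : ℝ} (hℓ : 0 ≤ ℓ) (hW : 0 ≤ W)
    (hγ : 0 < γ) : 0 ≤ if P then ℓ / (W + γ) else 0 := by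
  split_ifs
  exacts [div_nonneg hℓ (by linarith), le_rfl]

theorem ite_div_add_le_inv {P : Prop} [Decidable P] {ℓ W γ : ℝ} (hℓ : ℓ ≤ 1) (hW : 0 ≤ W)
    (hγ : 0 < γ) : (if P then ℓ / (W + γ) else 0) ≤ 1 / γ := by
  split_ifs
  exacts [div_le_div₀ zero_le_one hℓ hγ (by linarith), by positivity]

theorem sum_mul_ite_mem {ι : Type*} [Fintype ι] [DecidableEq ι] (p : ι → ℝ)
    (N : Finset ι) (c : ℝ) :
    ∑ k, p k * (if k ∈ N then c else 0) = (∑ k ∈ N, p k) * c := by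
  simp only [mul_ite, mul_zero, sum_ite_mem, univ_inter, sum_mul]

theorem mul_div_add_le_one {ℓ W γ : ℝ} (hℓ : ℓ ≤ 1) (hW : 0 ≤ W) (hγ : 0 < γ) :
    W * (ℓ / (W + γ)) ≤ 1 := by
  rw [mul_div_assoc', div_le_one (by linarith)]
  nlinarith

theorem sum_mul_sum_mul_comm {ι κ : Type*} [Fintype ι] (t : Finset κ) (p : ι → ℝ) (a : κ → ℝ)
    (x : ι → κ → ℝ) :
    ∑ k, p k * ∑ i ∈ t, a i * x k i = ∑ i ∈ t, a i * ∑ k, p k * x k i := by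
  simp only [mul_sum]
  rw [sum_comm]
  exact sum_congr rfl fun _ _ => sum_congr rfl fun _ _ => by ring

theorem stmt_11_general (K : ℕ) (Nin : Fin K → Finset (Fin K)) (p : Fin K → ℝ)
    (hpnn : ∀ i, 0 ≤ p i)
    (γ : ℝ) (hγ : 0 < γ)
    (ℓ : Fin K → ℝ) (hℓ : ∀ i, ℓ i ∈ Set.Icc (0 : ℝ) 1)
    (S : Finset (Fin K))
    (W : Fin K → ℝ) (hW : ∀ i, W i = ∑ j ∈ Nin i, p j)
    (ℓhat : Fin K → Fin K → ℝ)
    (hℓhat : ∀ k i, ℓhat k i = if k ∈ Nin i then ℓ i / (W i + γ) else 0)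
    (Q : ℝ) (hQ : Q = ∑ i ∈ S, p i / (W i + γ)) :
    ∑ k, p k * (∑ i ∈ S, (p i / (W i + γ)) * ℓhat k i) ^ 2 ≤ Q ^ 2 / γ := by
  have hW₀ : ∀ i, 0 ≤ W i := fun i => (hW i).symm ▸ sum_nonneg fun j _ => hpnn j
  have ha : ∀ i, 0 ≤ p i / (W i + γ) := fun i => div_nonneg (hpnn i) (by linarith [hW₀ i])
  have hQ₀ : 0 ≤ Q := hQ ▸ sum_nonneg fun i _ => ha i
  set f : Fin K → ℝ := fun k => ∑ i ∈ S, (p i / (W i + γ)) * ℓhat k i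
  have hf₀ : ∀ k, 0 ≤ f k := fun k => sum_nonneg fun i _ =>
    mul_nonneg (ha i) (hℓhat k i ▸ ite_div_add_nonneg (hℓ i).1 (hW₀ i) hγ)
  have hf_le : ∀ k, f k ≤ Q / γ := fun k => calc
    f k ≤ ∑ i ∈ S, (p i / (W i + γ)) * (1 / γ) := sum_le_sum fun i _ =>
        mul_le_mul_of_nonneg_left (hℓhat k i ▸ ite_div_add_le_inv (hℓ i).2 (hW₀ i) hγ) (ha i)
    _ = Q / γ := by rw [← sum_mul, ← hQ, mul_one_div]
  have hmean : ∑ k, p k * f k ≤ Q := calc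
    ∑ k, p k * f k = ∑ i ∈ S, (p i / (W i + γ)) * (W i * (ℓ i / (W i + γ))) := by
        rw [sum_mul_sum_mul_comm]
        simp only [hℓhat, sum_mul_ite_mem, ← hW]
    _ ≤ ∑ i ∈ S, (p i / (W i + γ)) * 1 := sum_le_sum fun i _ =>
        mul_le_mul_of_nonneg_left (mul_div_add_le_one (hℓ i).2 (hW₀ i) hγ) (ha i)
    _ = Q := by simp only [mul_one, hQ]
  calc ∑ k, p k * f k ^ 2 ≤ Q / γ * ∑ k, p k * f k :=
        sum_mul_sq_le_mul_sum_mul _ (fun k _ => hpnn k) (fun k _ => hf₀ k) (fun k _ => hf_le k)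
    _ ≤ Q / γ * Q := mul_le_mul_of_nonneg_left hmean (div_nonneg hQ₀ hγ.le)
    _ = Q ^ 2 / γ := by ring

/-- Second-moment bound for the weighted implicit-exploration estimator: with
`Q = Σ_{i∈S} p_i/(W_i+γ)`, for a random index `I ∼ p` (expectation written as the
explicit sum over the law `p`), `E[(Σ_{i∈S} (p_i/(W_i+γ)) ℓ̂_i)²] ≤ Q²/γ`, where
`ℓ̂_i = ℓ_i · 1{I ∈ N^in(i)}/(W_i + γ)` and `S` is the set of nodes with a self-loop. -/
theorem stmt_11 (K : ℕ) (Nin : Fin K → Finset (Fin K)) (p : Fin K → ℝ)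
    (hpnn : ∀ i, 0 ≤ p i) (hpsum : ∑ i, p i = 1)
    (γ : ℝ) (hγ : 0 < γ) (hγhalf : γ ≤ 1 / 2)
    (ℓ : Fin K → ℝ) (hℓ : ∀ i, ℓ i ∈ Set.Icc (0 : ℝ) 1)
    (S : Finset (Fin K)) (hS : ∀ i, i ∈ S ↔ i ∈ Nin i)
    (W : Fin K → ℝ) (hW : ∀ i, W i = ∑ j ∈ Nin i, p j)
    (ℓhat : Fin K → Fin K → ℝ)
    (hℓhat : ∀ k i, ℓhat k i = if k ∈ Nin i then ℓ i / (W i + γ) else 0)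
    (Q : ℝ) (hQ : Q = ∑ i ∈ S, p i / (W i + γ)) :
    ∑ k, p k * (∑ i ∈ S, (p i / (W i + γ)) * ℓhat k i) ^ 2 ≤ Q ^ 2 / γ :=
  stmt_11_general K Nin p hpnn γ hγ ℓ hℓ S W hW ℓhat hℓhat Q hQ
end

section
/- Let G = ([K], E) be a directed graph with self-loop node set S = {i : (i,i) ∈ E}, let p be a probability vector on [K], let γ > 0, and let ℓ ∈ [0,1]^K. Set W_i = Σ_{j∈N^in(i)} p_j and let I be a random index with law p. Then, with Q = Σ_{i∈S} p_i/(W_i+γ), one has E[ ( Σ_{i∈S} ( W_i − 1{I ∈ N^in(i)} ) · p_i ℓ_i / (W_i + γ) )² ] ≤ Q. -/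
/-!
Write `a_i = p_i ℓ_i / (W_i + γ) ≥ 0` and `Y = Σ_{i∈S} a_i 1{I ∈ N^in(i)}`. The quantity to bound
is `E[(E Y - Y)²] = Var Y ≤ E[Y²]`. Since `0 ≤ Y ≤ A := Σ_{i∈S} a_i`, we get `E[Y²] ≤ A · E Y`,
and `E Y = Σ_{i∈S} a_i W_i ≤ Σ_{i∈S} p_i ≤ 1` while `A ≤ Q`.
-/

open Finset

variable {ι κ : Type*} [Fintype κ]

theorem sum_mul_mean_sub_sq_le_sum_mul_sq (p Y : κ → ℝ) (hp : ∑ k, p k = 1) :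
    ∑ k, p k * (∑ j, p j * Y j - Y k) ^ 2 ≤ ∑ k, p k * Y k ^ 2 := by
  set m := ∑ j, p j * Y j
  have hvar : ∑ k, p k * (m - Y k) ^ 2 = ∑ k, p k * Y k ^ 2 - m ^ 2 := by
    have hexpand : ∀ k, p k * (m - Y k) ^ 2 = m ^ 2 * p k - 2 * m * (p k * Y k) + p k * Y k ^ 2 :=
      fun k => by ring
    simp only [hexpand, sum_add_distrib, sum_sub_distrib, ← mul_sum, hp]
    ring
  linarith [sq_nonneg m]

theorem sum_mul_centered_weighted_sum_sq_le (p : κ → ℝ) (hp0 : ∀ k, 0 ≤ p k)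
    (hp : ∑ k, p k = 1) (S : Finset ι) (a : ι → ℝ) (ha : ∀ i, 0 ≤ a i) (f : ι → κ → ℝ)
    (hf0 : ∀ i k, 0 ≤ f i k) (hf1 : ∀ i k, f i k ≤ 1) :
    ∑ k, p k * (∑ i ∈ S, (∑ j, p j * f i j - f i k) * a i) ^ 2
      ≤ (∑ i ∈ S, a i * ∑ j, p j * f i j) * ∑ i ∈ S, a i := by
  set Y : κ → ℝ := fun k => ∑ i ∈ S, a i * f i k
  have hmean : ∑ j, p j * Y j = ∑ i ∈ S, a i * ∑ j, p j * f i j := by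
    simp only [Y, mul_sum]
    rw [sum_comm]
    exact sum_congr rfl fun i _ => sum_congr rfl fun j _ => by ring
  have hcenter : ∀ k, ∑ i ∈ S, (∑ j, p j * f i j - f i k) * a i = ∑ j, p j * Y j - Y k := by
    intro k
    rw [hmean, ← sum_sub_distrib]
    exact sum_congr rfl fun i _ => by ring
  have hY0 : ∀ k, 0 ≤ Y k := fun k => sum_nonneg fun i _ => mul_nonneg (ha i) (hf0 i k)
  have hYle : ∀ k, Y k ≤ ∑ i ∈ S, a i := fun k =>
    sum_le_sum fun i _ => mul_le_of_le_one_right (ha i) (hf1 i k)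
  calc ∑ k, p k * (∑ i ∈ S, (∑ j, p j * f i j - f i k) * a i) ^ 2
      = ∑ k, p k * (∑ j, p j * Y j - Y k) ^ 2 := by simp only [hcenter]
    _ ≤ ∑ k, p k * Y k ^ 2 := sum_mul_mean_sub_sq_le_sum_mul_sq p Y hp
    _ ≤ ∑ k, p k * (Y k * ∑ i ∈ S, a i) := by
      gcongr with k
      · exact hp0 k
      · rw [sq]
        exact mul_le_mul_of_nonneg_left (hYle k) (hY0 k)
    _ = (∑ i ∈ S, a i * ∑ j, p j * f i j) * ∑ i ∈ S, a i := by
      rw [← hmean, sum_mul]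
      exact sum_congr rfl fun k _ => by ring

theorem stmt_12_general (K : ℕ) (Nin : Fin K → Finset (Fin K)) (p : Fin K → ℝ)
    (hpnn : ∀ i, 0 ≤ p i) (hpsum : ∑ i, p i = 1)
    (γ : ℝ) (hγ : 0 < γ)
    (ℓ : Fin K → ℝ) (hℓ : ∀ i, ℓ i ∈ Set.Icc (0 : ℝ) 1)
    (S : Finset (Fin K))
    (W : Fin K → ℝ) (hW : ∀ i, W i = ∑ j ∈ Nin i, p j)
    (Q : ℝ) (hQ : Q = ∑ i ∈ S, p i / (W i + γ)) :
    ∑ k, p k *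
      (∑ i ∈ S, (W i - (if k ∈ Nin i then (1 : ℝ) else 0)) * p i * ℓ i / (W i + γ)) ^ 2
      ≤ Q := by
  set a : Fin K → ℝ := fun i => p i * ℓ i / (W i + γ)
  set χ : Fin K → Fin K → ℝ := fun i k => if k ∈ Nin i then 1 else 0
  have hW0 : ∀ i, 0 ≤ W i := fun i => hW i ▸ sum_nonneg fun j _ => hpnn j
  have hden : ∀ i, 0 < W i + γ := fun i => by linarith [hW0 i]
  have hmean : ∀ i, ∑ k, p k * χ i k = W i := fun i => by
    simp only [χ, mul_ite, mul_one, mul_zero, sum_ite_mem, univ_inter, hW]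
  have ha : ∀ i, 0 ≤ a i := fun i => div_nonneg (mul_nonneg (hpnn i) (hℓ i).1) (hden i).le
  have haW : ∑ i ∈ S, a i * W i ≤ 1 := calc
    ∑ i ∈ S, a i * W i ≤ ∑ i ∈ S, p i := sum_le_sum fun i _ => by
        rw [div_mul_eq_mul_div, div_le_iff₀ (hden i)]
        nlinarith [hpnn i, hγ, (hℓ i).1, (hℓ i).2, hW0 i, mul_nonneg (hpnn i) (hW0 i)]
    _ ≤ ∑ i, p i := sum_le_sum_of_subset_of_nonneg (subset_univ S) fun i _ _ => hpnn i
    _ = 1 := hpsum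
  have haQ : ∑ i ∈ S, a i ≤ Q := hQ ▸ sum_le_sum fun i _ =>
    div_le_div_of_nonneg_right (mul_le_of_le_one_right (hpnn i) (hℓ i).2) (hden i).le
  calc ∑ k, p k *
        (∑ i ∈ S, (W i - (if k ∈ Nin i then (1 : ℝ) else 0)) * p i * ℓ i / (W i + γ)) ^ 2
      = ∑ k, p k * (∑ i ∈ S, (∑ j, p j * χ i j - χ i k) * a i) ^ 2 := by
        simp only [hmean, a, χ, mul_div_assoc, mul_assoc]
    _ ≤ (∑ i ∈ S, a i * ∑ j, p j * χ i j) * ∑ i ∈ S, a i :=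
        sum_mul_centered_weighted_sum_sq_le p hpnn hpsum S a ha χ
          (fun i k => by simp only [χ]; split_ifs <;> norm_num)
          (fun i k => by simp only [χ]; split_ifs <;> norm_num)
    _ ≤ Q := by
        simp only [hmean]
        nlinarith [sum_nonneg fun i (_ : i ∈ S) => ha i]

/-- Second-moment bound for the bias term: with `Q = Σ_{i∈S} p_i/(W_i+γ)`, for a random
index `I ∼ p` (expectation written as the explicit sum over the law `p`),
`E[(Σ_{i∈S} (W_i − 1{I ∈ N^in(i)}) p_i ℓ_i/(W_i + γ))²] ≤ Q`, where `S` is the set of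
nodes with a self-loop. -/
theorem stmt_12 (K : ℕ) (Nin : Fin K → Finset (Fin K)) (p : Fin K → ℝ)
    (hpnn : ∀ i, 0 ≤ p i) (hpsum : ∑ i, p i = 1)
    (γ : ℝ) (hγ : 0 < γ)
    (ℓ : Fin K → ℝ) (hℓ : ∀ i, ℓ i ∈ Set.Icc (0 : ℝ) 1)
    (S : Finset (Fin K)) (hS : ∀ i, i ∈ S ↔ i ∈ Nin i)
    (W : Fin K → ℝ) (hW : ∀ i, W i = ∑ j ∈ Nin i, p j)
    (Q : ℝ) (hQ : Q = ∑ i ∈ S, p i / (W i + γ)) :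
    ∑ k, p k *
      (∑ i ∈ S, (W i - (if k ∈ Nin i then (1 : ℝ) else 0)) * p i * ℓ i / (W i + γ)) ^ 2
      ≤ Q :=
  stmt_12_general K Nin p hpnn hpsum γ hγ ℓ hℓ S W hW Q hQ
end

section
/- For all real numbers γ > 0, W > 0 and ℓ ∈ [0,1], one has ℓ/(W + γ) ≤ (1/(2γ)) · ln(1 + 2γℓ/W). -/
open Real

/-- With `z = 2γℓ/W`, the left side is `(1/(2γ)) · 2z/(z + 2)`, so this is the bound
`2z/(z + 2) ≤ log (1 + z)`. -/
lemma div_add_mul_le_inv_two_mul_log_one_add {γ W ℓ : ℝ} (hγ : 0 < γ) (hW : 0 < W)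
    (hℓ : 0 ≤ ℓ) :
    ℓ / (W + γ * ℓ) ≤ (1 / (2 * γ)) * log (1 + 2 * γ * ℓ / W) := by
  have hz : 0 ≤ 2 * γ * ℓ / W := by positivity
  calc ℓ / (W + γ * ℓ)
      = (1 / (2 * γ)) * (2 * (2 * γ * ℓ / W) / (2 * γ * ℓ / W + 2)) := by
        field_simp
        ring
    _ ≤ (1 / (2 * γ)) * log (1 + 2 * γ * ℓ / W) := by
        gcongr
        exact le_log_one_add_of_nonneg hz

/-- For all real numbers `γ > 0`, `W > 0` and `ℓ ∈ [0,1]`, one has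
`ℓ/(W + γ) ≤ (1/(2γ)) · ln(1 + 2γℓ/W)`. -/
theorem stmt_14 (γ W ℓ : ℝ) (hγ : 0 < γ) (hW : 0 < W) (hℓ : ℓ ∈ Set.Icc (0 : ℝ) 1) :
    ℓ / (W + γ) ≤ (1 / (2 * γ)) * Real.log (1 + 2 * γ * ℓ / W) := by
  obtain ⟨hℓ0, hℓ1⟩ := hℓ
  calc ℓ / (W + γ) ≤ ℓ / (W + γ * ℓ) := by
        gcongr
        exact mul_le_of_le_one_right hγ.le hℓ1
    _ ≤ (1 / (2 * γ)) * log (1 + 2 * γ * ℓ / W) :=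
        div_add_mul_le_inv_two_mul_log_one_add hγ hW hℓ0
end

section
/- Let G = (V, E) be a directed graph with |V| = K, let each node i ∈ V carry a weight w_i > 0 with Σ_{i∈V} w_i ≤ 1, and let γ > 0. Then Σ_{i∈V} w_i / ( w_i + Σ_{j∈N^in(i)} w_j + γ ) ≤ 2α · log( 1 + (⌈K²/γ⌉ + K)/α ) + 2, where α is the independence number of G. -/
/-!
Put `D i = w i + w(N^in(i)) + γ`. If every node of a set `t` has `w i + w(N^in(i)) ≤ d`, then
`w(t) ≤ 2αd`: the weighted Caro–Wei bound `∑_{i ∈ t} w i / w(N_t[i]) ≤ α`, Cauchy–Schwarz, and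
double counting `∑_{i ∈ t} w i · w(N_t[i]) ≤ 2d · w(t)` (each edge is counted once from each end).
Adding the nodes in increasing order of `D`, the node `a` added when the accumulated weight becomes
`W` has `D a ≥ γ + W / (2α)`, so its term is at most the increment of `2α log (1 + W / (2αγ))`.
Telescoping gives `2α log (1 + w(V) / (2αγ))`, and `w(V) ≤ 1 ≤ K²`.
-/

open Finset

section
variable {ι : Type*} [DecidableEq ι]

def IsIndependent (Nin : ι → Finset ι) (A : Finset ι) : Prop :=
  ∀ i ∈ A, ∀ j ∈ A, i ≠ j → i ∉ Nin j

/-- The closed neighbourhood of `i` within `S` in the underlying undirected graph. -/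
def closedNbhd (Nin : ι → Finset ι) (S : Finset ι) (i : ι) : Finset ι :=
  S.filter fun j => j = i ∨ i ∈ Nin j ∨ j ∈ Nin i

variable {Nin : ι → Finset ι}

@[simp]
lemma mem_closedNbhd {S : Finset ι} {i j : ι} :
    j ∈ closedNbhd Nin S i ↔ j ∈ S ∧ (j = i ∨ i ∈ Nin j ∨ j ∈ Nin i) :=
  mem_filter

lemma self_mem_closedNbhd {S : Finset ι} {i : ι} (hi : i ∈ S) : i ∈ closedNbhd Nin S i :=
  mem_closedNbhd.2 ⟨hi, Or.inl rfl⟩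

lemma closedNbhd_subset (S : Finset ι) (i : ι) : closedNbhd Nin S i ⊆ S :=
  filter_subset _ _

lemma closedNbhd_mono {S T : Finset ι} (h : S ⊆ T) (i : ι) :
    closedNbhd Nin S i ⊆ closedNbhd Nin T i :=
  filter_subset_filter _ h

lemma IsIndependent.insert {A : Finset ι} {v : ι} (hA : IsIndependent Nin A)
    (hv : ∀ j ∈ A, v ∉ Nin j ∧ j ∉ Nin v) : IsIndependent Nin (insert v A) := by
  intro i hi j hj hij
  rcases mem_insert.1 hi with rfl | hiA
  · rcases mem_insert.1 hj with rfl | hjA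
    · exact absurd rfl hij
    · exact (hv j hjA).1
  · rcases mem_insert.1 hj with rfl | hjA
    · exact (hv i hiA).2
    · exact hA i hiA j hjA hij

variable {w : ι → ℝ}

lemma weight_closedNbhd_pos (hw : ∀ i, 0 < w i) {S : Finset ι} {i : ι} (hi : i ∈ S) :
    0 < ∑ j ∈ closedNbhd Nin S i, w j :=
  (hw i).trans_le (single_le_sum (fun j _ => (hw j).le) (self_mem_closedNbhd hi))

theorem exists_isIndependent_sum_div_le_card (hw : ∀ i, 0 < w i) (S : Finset ι) :
    ∃ A ⊆ S, IsIndependent Nin A ∧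
      ∑ i ∈ S, w i / ∑ j ∈ closedNbhd Nin S i, w j ≤ #A := by
  induction S using Finset.strongInduction with
  | H S ih =>
  rcases S.eq_empty_or_nonempty with rfl | hne
  · exact ⟨∅, subset_rfl, by simp [IsIndependent], by simp⟩
  obtain ⟨v, hvS, hvmin⟩ := S.exists_min_image (fun i => ∑ j ∈ closedNbhd Nin S i, w j) hne
  set N := closedNbhd Nin S v
  obtain ⟨A, hAS, hA, hsum⟩ :=
    ih (S \ N) (sdiff_ssubset (closedNbhd_subset S v) ⟨v, self_mem_closedNbhd hvS⟩)
  refine ⟨insert v A, insert_subset hvS (hAS.trans sdiff_subset), hA.insert fun j hj => ?_, ?_⟩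
  · have hjN : j ∉ N := (mem_sdiff.1 (hAS hj)).2
    simp only [N, mem_closedNbhd, not_and, not_or] at hjN
    exact ⟨(hjN (sdiff_subset (hAS hj))).2.1, (hjN (sdiff_subset (hAS hj))).2.2⟩
  have hN : ∑ i ∈ N, w i / ∑ j ∈ closedNbhd Nin S i, w j ≤ 1 := calc
    _ ≤ ∑ i ∈ N, w i / ∑ j ∈ N, w j := sum_le_sum fun i hi =>
          div_le_div_of_nonneg_left (hw i).le (weight_closedNbhd_pos hw hvS)
            (hvmin i (closedNbhd_subset S v hi))
    _ = 1 := by rw [← sum_div, div_self (weight_closedNbhd_pos hw hvS).ne']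
  have hrest : ∑ i ∈ S \ N, w i / ∑ j ∈ closedNbhd Nin S i, w j
      ≤ ∑ i ∈ S \ N, w i / ∑ j ∈ closedNbhd Nin (S \ N) i, w j :=
    sum_le_sum fun i hi => div_le_div_of_nonneg_left (hw i).le (weight_closedNbhd_pos hw hi)
      (sum_le_sum_of_subset_of_nonneg (closedNbhd_mono sdiff_subset i) fun j _ _ => (hw j).le)
  rw [← sum_sdiff (closedNbhd_subset S v), card_insert_of_notMem fun hv =>
    (mem_sdiff.1 (hAS hv)).2 (self_mem_closedNbhd hvS)]
  push_cast
  exact add_le_add (hrest.trans hsum) hN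

lemma sum_mul_weight_closedNbhd_le (hw : ∀ i, 0 ≤ w i) (t : Finset ι) :
    ∑ i ∈ t, w i * ∑ j ∈ closedNbhd Nin t i, w j
      ≤ 2 * ∑ i ∈ t, w i * (w i + ∑ j ∈ Nin i, w j) := by
  have hnbhd : ∀ i ∈ t, ∑ j ∈ closedNbhd Nin t i, w j
      ≤ w i + ∑ j ∈ t with i ∈ Nin j, w j + ∑ j ∈ Nin i, w j := by
    intro i hi
    calc ∑ j ∈ closedNbhd Nin t i, w j
        = ∑ j ∈ t, if j = i ∨ i ∈ Nin j ∨ j ∈ Nin i then w j else 0 := sum_filter _ _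
      _ ≤ ∑ j ∈ t, ((if j = i then w j else 0) + (if i ∈ Nin j then w j else 0)
            + (if j ∈ Nin i then w j else 0)) :=
          sum_le_sum fun j _ => by have := hw j; split_ifs <;> simp_all
      _ = w i + ∑ j ∈ t with i ∈ Nin j, w j + ∑ j ∈ t with j ∈ Nin i, w j := by
          rw [sum_add_distrib, sum_add_distrib, sum_ite_eq', if_pos hi, sum_filter, sum_filter]
      _ ≤ _ := add_le_add_right (sum_le_sum_of_subset_of_nonneg
          (fun j hj => (mem_filter.1 hj).2) fun j _ _ => hw j) _
  have hswap : ∑ i ∈ t, w i * ∑ j ∈ t with i ∈ Nin j, w j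
      ≤ ∑ j ∈ t, w j * ∑ i ∈ Nin j, w i := calc
    _ = ∑ j ∈ t, w j * ∑ i ∈ t with i ∈ Nin j, w i := by
        simp_rw [mul_sum]
        rw [sum_comm' (t' := t) (s' := fun j => t.filter fun i => i ∈ Nin j) (by simp; tauto)]
        simp_rw [mul_comm]
    _ ≤ _ := sum_le_sum fun j _ => mul_le_mul_of_nonneg_left
        (sum_le_sum_of_subset_of_nonneg (fun i hi => (mem_filter.1 hi).2) fun i _ _ => hw i)
        (hw j)
  calc ∑ i ∈ t, w i * ∑ j ∈ closedNbhd Nin t i, w j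
      ≤ ∑ i ∈ t, w i * (w i + ∑ j ∈ t with i ∈ Nin j, w j + ∑ j ∈ Nin i, w j) :=
        sum_le_sum fun i hi => mul_le_mul_of_nonneg_left (hnbhd i hi) (hw i)
    _ = ∑ i ∈ t, w i * w i + ∑ i ∈ t, w i * ∑ j ∈ t with i ∈ Nin j, w j
          + ∑ i ∈ t, w i * ∑ j ∈ Nin i, w j := by
        simp only [mul_add, sum_add_distrib]
    _ ≤ _ := by
        have : 0 ≤ ∑ i ∈ t, w i * w i := sum_nonneg fun i _ => mul_self_nonneg _
        simp only [mul_add, sum_add_distrib]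
        linarith

theorem sum_le_two_mul_of_forall_le (hw : ∀ i, 0 < w i) {α : ℕ}
    (hα : ∀ A, IsIndependent Nin A → #A ≤ α) {t : Finset ι} (ht : t.Nonempty) {d : ℝ}
    (hd : ∀ i ∈ t, w i + ∑ j ∈ Nin i, w j ≤ d) :
    ∑ i ∈ t, w i ≤ 2 * α * d := by
  obtain ⟨A, -, hA, hCW⟩ := exists_isIndependent_sum_div_le_card (Nin := Nin) hw t
  set W := ∑ i ∈ t, w i
  have hW : 0 < W := sum_pos (fun i _ => hw i) ht
  obtain ⟨i₀, hi₀⟩ := ht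
  have hd₀ : 0 < d := calc
    0 < w i₀ := hw i₀
    _ ≤ w i₀ + ∑ j ∈ Nin i₀, w j := le_add_of_nonneg_right (sum_nonneg fun j _ => (hw j).le)
    _ ≤ d := hd i₀ hi₀
  have hmass : ∑ i ∈ t, w i * ∑ j ∈ closedNbhd Nin t i, w j ≤ 2 * d * W := calc
    _ ≤ 2 * ∑ i ∈ t, w i * (w i + ∑ j ∈ Nin i, w j) :=
        sum_mul_weight_closedNbhd_le (fun i => (hw i).le) t
    _ ≤ 2 * ∑ i ∈ t, w i * d := by
        gcongr with i hi
        · exact (hw i).le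
        · exact hd i hi
    _ = 2 * d * W := by rw [← sum_mul]; ring
  have hmass_pos : 0 < ∑ i ∈ t, w i * ∑ j ∈ closedNbhd Nin t i, w j :=
    sum_pos (fun i hi => mul_pos (hw i) (weight_closedNbhd_pos hw hi)) ⟨i₀, hi₀⟩
  -- Cauchy–Schwarz in Sedrakyan's form, with numerators `w i` and denominators `w i * w(N_t[i])`
  have hCS : W ^ 2 / ∑ i ∈ t, w i * ∑ j ∈ closedNbhd Nin t i, w j
      ≤ ∑ i ∈ t, w i / ∑ j ∈ closedNbhd Nin t i, w j := by
    refine (sq_sum_div_le_sum_sq_div t w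
      fun i hi => mul_pos (hw i) (weight_closedNbhd_pos hw hi)).trans_eq (sum_congr rfl ?_)
    intro i _
    rw [sq, mul_div_mul_left _ _ (hw i).ne']
  have hratio : W / (2 * d) ≤ α := calc
    W / (2 * d) = W ^ 2 / (2 * d * W) := by rw [sq, mul_div_mul_right _ _ hW.ne']
    _ ≤ W ^ 2 / ∑ i ∈ t, w i * ∑ j ∈ closedNbhd Nin t i, w j :=
        div_le_div_of_nonneg_left (sq_nonneg W) hmass_pos hmass
    _ ≤ #A := hCS.trans hCW
    _ ≤ α := by exact_mod_cast hα A hA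
  rw [div_le_iff₀ (by positivity)] at hratio
  linarith

lemma sub_div_le_log_sub_log {x y : ℝ} (hx : 0 < x) (hxy : x ≤ y) :
    (y - x) / y ≤ Real.log y - Real.log x := by
  have hy := hx.trans_le hxy
  have := Real.one_sub_inv_le_log_of_pos (div_pos hy hx)
  rwa [inv_div, Real.log_div hy.ne' hx.ne', one_sub_div hy.ne'] at this

theorem sum_div_le_mul_log_one_add {w D : ι → ℝ} {κ γ : ℝ} (hκ : 0 < κ) (hγ : 0 < γ)
    (hw : ∀ i, 0 ≤ w i)
    (hlevel : ∀ t : Finset ι, ∀ a ∈ t, (∀ i ∈ t, D i ≤ D a) → ∑ i ∈ t, w i ≤ κ * (D a - γ))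
    (s : Finset ι) :
    ∑ i ∈ s, w i / D i ≤ κ * Real.log (1 + (∑ i ∈ s, w i) / (κ * γ)) := by
  induction s using Finset.induction_on_max_value D with
  | empty => simp
  | insert a s ha hmax ih =>
    rw [sum_insert ha, sum_insert ha]
    set W := ∑ i ∈ s, w i
    have hW : 0 ≤ W := sum_nonneg fun i _ => hw i
    have hmass : w a + W ≤ κ * (D a - γ) := by
      simpa [sum_insert ha] using
        hlevel (insert a s) a (mem_insert_self a s) (forall_mem_insert _ _ _ |>.2 ⟨le_rfl, hmax⟩)
    set x := 1 + W / (κ * γ)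
    set y := 1 + (w a + W) / (κ * γ) with hy_def
    have hx : 0 < x := by positivity
    have hyx : y - x = w a / (κ * γ) := by ring
    have hxy : x ≤ y := sub_nonneg.1 (hyx ▸ div_nonneg (hw a) (by positivity))
    have hDa : γ * y ≤ D a := by
      have : γ * y = γ + (w a + W) / κ := by rw [hy_def]; field_simp
      rw [this, ← le_sub_iff_add_le', div_le_iff₀ hκ]
      linarith
    have hstep : w a / D a ≤ κ * (Real.log y - Real.log x) := calc
      w a / D a ≤ w a / (γ * y) :=
        div_le_div_of_nonneg_left (hw a) (mul_pos hγ (hx.trans_le hxy)) hDa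
      _ = κ * ((y - x) / y) := by rw [hyx]; field_simp
      _ ≤ κ * (Real.log y - Real.log x) := by gcongr; exact sub_div_le_log_sub_log hx hxy
    calc w a / D a + ∑ i ∈ s, w i / D i
        ≤ κ * (Real.log y - Real.log x) + κ * Real.log x := add_le_add hstep ih
      _ = κ * Real.log y := by ring

end

theorem stmt_17_general (K : ℕ) (Nin : Fin K → Finset (Fin K)) (w : Fin K → ℝ)
    (hw : ∀ i, 0 < w i) (hwsum : ∑ i, w i ≤ 1) (γ : ℝ) (hγ : 0 < γ)
    (α : ℕ)
    (hub : ∀ A : Finset (Fin K), (∀ i ∈ A, ∀ j ∈ A, i ≠ j → i ∉ Nin j) → A.card ≤ α) :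
    ∑ i, w i / (w i + (∑ j ∈ Nin i, w j) + γ) ≤
      2 * α * Real.log (1 + ((⌈(K : ℝ) ^ 2 / γ⌉ : ℝ) + K) / α) + 2 := by
  rcases Nat.eq_zero_or_pos K with rfl | hK
  · simp
  have hα : (0 : ℝ) < α := by
    have : 1 ≤ α := by simpa using hub {⟨0, hK⟩} (by simp)
    exact Nat.cast_pos.2 this
  set W := ∑ i, w i
  have hW : 0 ≤ W := sum_nonneg fun i _ => (hw i).le
  have hW_le : W / (2 * γ) ≤ (⌈(K : ℝ) ^ 2 / γ⌉ : ℝ) + K := calc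
    W / (2 * γ) = W / 2 / γ := (div_div W 2 γ).symm
    _ ≤ (K : ℝ) ^ 2 / γ := by
      have : (1 : ℝ) ≤ K := by exact_mod_cast hK
      gcongr
      nlinarith
    _ ≤ ⌈(K : ℝ) ^ 2 / γ⌉ := Int.le_ceil _
    _ ≤ _ := le_add_of_nonneg_right (Nat.cast_nonneg K)
  calc ∑ i, w i / (w i + (∑ j ∈ Nin i, w j) + γ)
      ≤ 2 * α * Real.log (1 + W / (2 * α * γ)) :=
        sum_div_le_mul_log_one_add (by positivity) hγ (fun i => (hw i).le)
          (fun t a ha hmax => sum_le_two_mul_of_forall_le hw hub ⟨a, ha⟩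
            fun i hi => by linarith [hmax i hi]) univ
    _ ≤ 2 * α * Real.log (1 + ((⌈(K : ℝ) ^ 2 / γ⌉ : ℝ) + K) / α) := by
        have : W / (2 * α * γ) = W / (2 * γ) / α := by field_simp
        refine mul_le_mul_of_nonneg_left (Real.log_le_log (by positivity) ?_) (by positivity)
        rw [this]
        gcongr
    _ ≤ _ := le_add_of_nonneg_right zero_le_two

/-- Graph lemma (Lemma 1 of Kocák et al.): for a directed graph on `K` nodes with
positive node weights summing to at most `1`, and any `γ > 0`,
`Σ_i w_i/(w_i + Σ_{j ∈ N^in(i)} w_j + γ) ≤ 2α log(1 + (⌈K²/γ⌉ + K)/α) + 2`,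
where `α` is the independence number of the graph. -/
theorem stmt_17 (K : ℕ) (Nin : Fin K → Finset (Fin K)) (w : Fin K → ℝ)
    (hw : ∀ i, 0 < w i) (hwsum : ∑ i, w i ≤ 1) (γ : ℝ) (hγ : 0 < γ)
    (α : ℕ)
    (hub : ∀ A : Finset (Fin K), (∀ i ∈ A, ∀ j ∈ A, i ≠ j → i ∉ Nin j) → A.card ≤ α)
    (hach : ∃ A : Finset (Fin K),
      (∀ i ∈ A, ∀ j ∈ A, i ≠ j → i ∉ Nin j) ∧ A.card = α) :
    ∑ i, w i / (w i + (∑ j ∈ Nin i, w j) + γ) ≤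
      2 * α * Real.log (1 + ((⌈(K : ℝ) ^ 2 / γ⌉ : ℝ) + K) / α) + 2 :=
  stmt_17_general K Nin w hw hwsum γ hγ α hub
end
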